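/- Let n ≥ 1 be arbitrary and set k = ⌊n/2⌋. Then the convex hull of the n×n VHSASMs in ℝ^{n×n} equals P_ASM ∩ P_VS ∩ P_HS ∩ {X ∈ ℝ^{n×n} : x_{i,k+1} = x_{k+1,i} = (−1)^{i+1} for all i ∈ {1,…,n}}. -/

import Mathlib

set_option maxHeartbeats 1000000

def IsASM (n : ℕ) (X : Fin n → Fin n → ℝ) : Prop :=
  (∀ i j, X i j = -1 ∨ X i j = 0 ∨ X i j = 1) ∧
  (∀ i j, (∑ j' ∈ Finset.Iic j, X i j') = 0 ∨ (∑ j' ∈ Finset.Iic j, X i j') = 1) ∧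
  (∀ i j, (∑ i' ∈ Finset.Iic i, X i' j) = 0 ∨ (∑ i' ∈ Finset.Iic i, X i' j) = 1) ∧
  (∀ i, (∑ j, X i j) = 1) ∧
  (∀ j, (∑ i, X i j) = 1)

namespace VHSaux
open Finset

/-- zero extension of a matrix to ℕ × ℕ -/
def ex (n : ℕ) (W : Fin n → Fin n → ℝ) (a b : ℕ) : ℝ :=
  if h : a < n ∧ b < n then W ⟨a, h.1⟩ ⟨b, h.2⟩ else 0

lemma ex_apply (n : ℕ) (W : Fin n → Fin n → ℝ) (i j : Fin n) :
    ex n W i j = W i j := by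
  simp [ex, i.isLt, j.isLt]

lemma ex_big_right (n : ℕ) (W : Fin n → Fin n → ℝ) (a b : ℕ) (hb : n ≤ b) :
    ex n W a b = 0 := by
  unfold ex
  have h : ¬(a < n ∧ b < n) := by omega
  rw [dif_neg h]

lemma ex_big_left (n : ℕ) (W : Fin n → Fin n → ℝ) (a b : ℕ) (ha : n ≤ a) :
    ex n W a b = 0 := by
  unfold ex
  have h : ¬(a < n ∧ b < n) := by omega
  rw [dif_neg h]

/-- row prefix sums -/
def rp (n : ℕ) (W : Fin n → Fin n → ℝ) (a b : ℕ) : ℝ := ∑ j ∈ Finset.range b, ex n W a j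
/-- column prefix sums -/
def cp (n : ℕ) (W : Fin n → Fin n → ℝ) (a b : ℕ) : ℝ := ∑ i ∈ Finset.range a, ex n W i b
/-- corner sums -/
def hh (n : ℕ) (W : Fin n → Fin n → ℝ) (a b : ℕ) : ℝ := ∑ i ∈ Finset.range a, rp n W i b

lemma sum_Iic_eq_rp (n : ℕ) (W : Fin n → Fin n → ℝ) (i j : Fin n) :
    (∑ j' ∈ Finset.Iic j, W i j') = rp n W i (j + 1) := by
  rw [rp]
  refine Finset.sum_bij' (fun (a : Fin n) _ => (a : ℕ))
    (fun (a : ℕ) ha => ⟨a, lt_of_le_of_lt (Nat.lt_succ_iff.mp (Finset.mem_range.mp ha)) j.isLt⟩)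
    ?_ ?_ ?_ ?_ ?_
  · intro a ha
    rw [Finset.mem_range, Nat.lt_succ_iff]
    exact Fin.le_def.mp (Finset.mem_Iic.mp ha)
  · intro a ha
    rw [Finset.mem_Iic]
    exact Fin.le_def.mpr (Nat.lt_succ_iff.mp (Finset.mem_range.mp ha))
  · intro a ha; rfl
  · intro a ha; rfl
  · intro a ha; rw [ex_apply]

lemma sum_univ_eq_rp (n : ℕ) (W : Fin n → Fin n → ℝ) (i : Fin n) :
    (∑ j, W i j) = rp n W i n := by
  rw [rp, ← Fin.sum_univ_eq_sum_range (fun j => ex n W i j) n]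
  refine Finset.sum_congr rfl fun j _ => (ex_apply n W i j).symm

lemma sum_Iic_eq_cp (n : ℕ) (W : Fin n → Fin n → ℝ) (i j : Fin n) :
    (∑ i' ∈ Finset.Iic i, W i' j) = cp n W (i + 1) j := by
  rw [cp]
  refine Finset.sum_bij' (fun (a : Fin n) _ => (a : ℕ))
    (fun (a : ℕ) ha => ⟨a, lt_of_le_of_lt (Nat.lt_succ_iff.mp (Finset.mem_range.mp ha)) i.isLt⟩)
    ?_ ?_ ?_ ?_ ?_
  · intro a ha
    rw [Finset.mem_range, Nat.lt_succ_iff]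
    exact Fin.le_def.mp (Finset.mem_Iic.mp ha)
  · intro a ha
    rw [Finset.mem_Iic]
    exact Fin.le_def.mpr (Nat.lt_succ_iff.mp (Finset.mem_range.mp ha))
  · intro a ha; rfl
  · intro a ha; rfl
  · intro a ha; rw [ex_apply]

lemma sum_univ_eq_cp (n : ℕ) (W : Fin n → Fin n → ℝ) (j : Fin n) :
    (∑ i, W i j) = cp n W n j := by
  rw [cp, ← Fin.sum_univ_eq_sum_range (fun i => ex n W i j) n]
  refine Finset.sum_congr rfl fun i _ => (ex_apply n W i j).symm

/-- reflection reindexing of a sum -/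
lemma sum_reflect (n b : ℕ) (hb : b ≤ n) (f : ℕ → ℝ) :
    ∑ j ∈ Finset.Ico (n - b) n, f j = ∑ j ∈ Finset.range b, f (n - 1 - j) := by
  rw [Finset.range_eq_Ico]
  refine Finset.sum_bij' (fun a _ => n - 1 - a) (fun a _ => n - 1 - a) ?_ ?_ ?_ ?_ ?_
  · intro a ha
    rw [Finset.mem_Ico] at ha
    show n - 1 - a ∈ Finset.Ico 0 b
    rw [Finset.mem_Ico]
    omega
  · intro a ha
    rw [Finset.mem_Ico] at ha
    show n - 1 - a ∈ Finset.Ico (n - b) n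
    rw [Finset.mem_Ico]
    omega
  · intro a ha
    rw [Finset.mem_Ico] at ha
    show n - 1 - (n - 1 - a) = a
    omega
  · intro a ha
    rw [Finset.mem_Ico] at ha
    show n - 1 - (n - 1 - a) = a
    omega
  · intro a ha
    rw [Finset.mem_Ico] at ha
    have h : n - 1 - (n - 1 - a) = a := by omega
    show f a = f (n - 1 - (n - 1 - a))
    rw [h]

section GoodSection
open Finset

structure Good (n k : ℕ) (W : Fin n → Fin n → ℝ) : Prop where
  rlo : ∀ a b, a < n → b ≤ n → 0 ≤ rp n W a b
  rhi : ∀ a b, a < n → b ≤ n → rp n W a b ≤ 1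
  rfull : ∀ a, a < n → rp n W a n = 1
  clo : ∀ a b, a ≤ n → b < n → 0 ≤ cp n W a b
  chi : ∀ a b, a ≤ n → b < n → cp n W a b ≤ 1
  cfull : ∀ b, b < n → cp n W n b = 1
  vsym : ∀ a b, a < n → b < n → ex n W a b = ex n W a (n - 1 - b)
  hsym : ∀ a b, a < n → b < n → ex n W a b = ex n W (n - 1 - a) b
  midc : ∀ a, a < n → ex n W a k = (-1) ^ a
  midr : ∀ b, b < n → ex n W k b = (-1) ^ b

variable {n k : ℕ} {W : Fin n → Fin n → ℝ}

lemma hh_eq_sum_cp (n : ℕ) (W : Fin n → Fin n → ℝ) (a b : ℕ) :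
    hh n W a b = ∑ j ∈ Finset.range b, cp n W a j := by
  rw [hh]
  simp only [rp, cp]
  exact Finset.sum_comm

lemma hh_vdiff (n : ℕ) (W : Fin n → Fin n → ℝ) (a b : ℕ) :
    hh n W (a + 1) b - hh n W a b = rp n W a b := by
  rw [hh, hh, Finset.sum_range_succ]; ring

lemma hh_hdiff (n : ℕ) (W : Fin n → Fin n → ℝ) (a b : ℕ) :
    hh n W a (b + 1) - hh n W a b = cp n W a b := by
  rw [hh_eq_sum_cp, hh_eq_sum_cp, Finset.sum_range_succ]; ring

lemma hh_zero_left (n : ℕ) (W : Fin n → Fin n → ℝ) (b : ℕ) : hh n W 0 b = 0 := by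
  simp [hh]

lemma hh_zero_right (n : ℕ) (W : Fin n → Fin n → ℝ) (a : ℕ) : hh n W a 0 = 0 := by
  simp [hh, rp]

lemma hh_full_right (hG : Good n k W) (a : ℕ) (ha : a ≤ n) : hh n W a n = a := by
  rw [hh]
  rw [Finset.sum_congr rfl (fun i hi => hG.rfull i (lt_of_lt_of_le (Finset.mem_range.mp hi) ha))]
  simp

lemma hh_full_left (hG : Good n k W) (b : ℕ) (hb : b ≤ n) : hh n W n b = b := by
  rw [hh_eq_sum_cp]
  rw [Finset.sum_congr rfl (fun j hj => hG.cfull j (lt_of_lt_of_le (Finset.mem_range.mp hj) hb))]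
  simp

lemma rp_reflect (hG : Good n k W) (a b : ℕ) (ha : a < n) (hb : b ≤ n) :
    rp n W a (n - b) = 1 - rp n W a b := by
  have hsplit : rp n W a (n - b) + ∑ j ∈ Finset.Ico (n - b) n, ex n W a j = rp n W a n := by
    rw [rp, rp, Finset.range_eq_Ico, Finset.range_eq_Ico]
    exact Finset.sum_Ico_consecutive _ (Nat.zero_le _) (Nat.sub_le n b)
  have htail : ∑ j ∈ Finset.Ico (n - b) n, ex n W a j = rp n W a b := by
    rw [sum_reflect n b hb]
    rw [rp]
    refine Finset.sum_congr rfl fun j hj => ?_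
    have hjn : j < n := lt_of_lt_of_le (Finset.mem_range.mp hj) hb
    exact (hG.vsym a j ha hjn).symm
  rw [htail, hG.rfull a ha] at hsplit
  linarith

lemma cp_reflect (hG : Good n k W) (a b : ℕ) (ha : a ≤ n) (hb : b < n) :
    cp n W (n - a) b = 1 - cp n W a b := by
  have hsplit : cp n W (n - a) b + ∑ i ∈ Finset.Ico (n - a) n, ex n W i b = cp n W n b := by
    rw [cp, cp, Finset.range_eq_Ico, Finset.range_eq_Ico]
    exact Finset.sum_Ico_consecutive _ (Nat.zero_le _) (Nat.sub_le n a)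
  have htail : ∑ i ∈ Finset.Ico (n - a) n, ex n W i b = cp n W a b := by
    rw [sum_reflect n a ha]
    rw [cp]
    refine Finset.sum_congr rfl fun i hi => ?_
    have hin : i < n := lt_of_lt_of_le (Finset.mem_range.mp hi) ha
    exact (hG.hsym i b hin hb).symm
  rw [htail, hG.cfull b hb] at hsplit
  linarith

lemma hh_vreflect (hG : Good n k W) (a b : ℕ) (ha : a ≤ n) (hb : b ≤ n) :
    hh n W a (n - b) = a - hh n W a b := by
  rw [hh, hh]
  have : ∀ i ∈ Finset.range a, rp n W i (n - b) = 1 - rp n W i b := fun i hi =>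
    rp_reflect hG i b (lt_of_lt_of_le (Finset.mem_range.mp hi) ha) hb
  rw [Finset.sum_congr rfl this, Finset.sum_sub_distrib]
  simp

lemma hh_hreflect (hG : Good n k W) (a b : ℕ) (ha : a ≤ n) (hb : b ≤ n) :
    hh n W (n - a) b = b - hh n W a b := by
  rw [hh_eq_sum_cp, hh_eq_sum_cp]
  have : ∀ j ∈ Finset.range b, cp n W (n - a) j = 1 - cp n W a j := fun j hj =>
    cp_reflect hG a j ha (lt_of_lt_of_le (Finset.mem_range.mp hj) hb)
  rw [Finset.sum_congr rfl this, Finset.sum_sub_distrib]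
  simp

lemma cp_mid (hG : Good n k W) (a : ℕ) (ha : a ≤ n) :
    cp n W a k = (1 - (-1 : ℝ) ^ a) / 2 := by
  rw [cp]
  rw [Finset.sum_congr rfl (fun i hi => hG.midc i (lt_of_lt_of_le (Finset.mem_range.mp hi) ha))]
  rw [geom_sum_eq (by norm_num : (-1 : ℝ) ≠ 1) a]
  ring

lemma rp_mid (hG : Good n k W) (b : ℕ) (hb : b ≤ n) :
    rp n W k b = (1 - (-1 : ℝ) ^ b) / 2 := by
  rw [rp]
  rw [Finset.sum_congr rfl (fun j hj => hG.midr j (lt_of_lt_of_le (Finset.mem_range.mp hj) hb))]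
  rw [geom_sum_eq (by norm_num : (-1 : ℝ) ≠ 1) b]
  ring

lemma hh_fold_col (hG : Good n k W) (hn : n = 2 * k + 1) (a : ℕ) (ha : a ≤ n) :
    ∃ m : ℤ, hh n W a k = m := by
  have hk1 : k + 1 ≤ n := by omega
  have h5 : hh n W a (n - (k + 1)) = a - hh n W a (k + 1) := hh_vreflect hG a (k + 1) ha hk1
  have hnk : n - (k + 1) = k := by omega
  rw [hnk] at h5
  have hstep : hh n W a (k + 1) - hh n W a k = cp n W a k := hh_hdiff n W a k
  have hcp : cp n W a k = (1 - (-1 : ℝ) ^ a) / 2 := cp_mid hG a ha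
  rcases Nat.even_or_odd a with he | ho
  · obtain ⟨m, rfl⟩ := he
    refine ⟨m, ?_⟩
    rw [Even.neg_one_pow ⟨m, by omega⟩] at hcp
    push_cast
    push_cast at h5
    linarith
  · obtain ⟨m, rfl⟩ := ho
    refine ⟨m, ?_⟩
    rw [Odd.neg_one_pow ⟨m, by ring⟩] at hcp
    push_cast
    push_cast at h5
    linarith

lemma hh_fold_row (hG : Good n k W) (hn : n = 2 * k + 1) (b : ℕ) (hb : b ≤ n) :
    ∃ m : ℤ, hh n W k b = m := by
  have hk1 : k + 1 ≤ n := by omega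
  have h6 : hh n W (n - (k + 1)) b = b - hh n W (k + 1) b := hh_hreflect hG (k + 1) b hk1 hb
  have hnk : n - (k + 1) = k := by omega
  rw [hnk] at h6
  have hstep : hh n W (k + 1) b - hh n W k b = rp n W k b := hh_vdiff n W k b
  have hrp : rp n W k b = (1 - (-1 : ℝ) ^ b) / 2 := rp_mid hG b hb
  rcases Nat.even_or_odd b with he | ho
  · obtain ⟨m, rfl⟩ := he
    refine ⟨m, ?_⟩
    rw [Even.neg_one_pow ⟨m, by omega⟩] at hrp
    push_cast
    push_cast at h6
    linarith
  · obtain ⟨m, rfl⟩ := ho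
    refine ⟨m, ?_⟩
    rw [Odd.neg_one_pow ⟨m, by ring⟩] at hrp
    push_cast
    push_cast at h6
    linarith

end GoodSection

section Convert
open Finset

variable {n k : ℕ}

/-- the relaxed constraint set -/
def Cset (n : ℕ) : Set (Fin n → Fin n → ℝ) :=
  {X | (∀ i j, 0 ≤ ∑ j' ∈ Finset.Iic j, X i j' ∧ (∑ j' ∈ Finset.Iic j, X i j') ≤ 1) ∧
       (∀ i j, 0 ≤ ∑ i' ∈ Finset.Iic i, X i' j ∧ (∑ i' ∈ Finset.Iic i, X i' j) ≤ 1) ∧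
       (∀ i, (∑ j, X i j) = 1) ∧ (∀ j, (∑ i, X i j) = 1)}

lemma convex_Cset (n : ℕ) : Convex ℝ (Cset n) := by
  intro X hX Y hY a b ha hb hab
  obtain ⟨hX1, hX2, hX3, hX4⟩ := hX
  obtain ⟨hY1, hY2, hY3, hY4⟩ := hY
  have key : ∀ (s : Finset (Fin n)) (f g : Fin n → ℝ),
      (∑ t ∈ s, ((a • fun t => f t) t + (b • fun t => g t) t) : ℝ)
        = a * (∑ t ∈ s, f t) + b * (∑ t ∈ s, g t) := by
    intro s f g
    simp only [Pi.smul_apply, smul_eq_mul]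
    rw [Finset.sum_add_distrib, Finset.mul_sum, Finset.mul_sum]
  constructor
  · intro i j
    have h1 := (hX1 i j).1; have h2 := (hX1 i j).2
    have h3 := (hY1 i j).1; have h4 := (hY1 i j).2
    have : ∑ j' ∈ Finset.Iic j, (a • X + b • Y) i j'
        = a * (∑ j' ∈ Finset.Iic j, X i j') + b * (∑ j' ∈ Finset.Iic j, Y i j') := by
      have := key (Finset.Iic j) (fun j' => X i j') (fun j' => Y i j')
      simpa using this
    rw [this]
    constructor
    · have := mul_nonneg ha h1; have := mul_nonneg hb h3; linarith
    · nlinarith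
  refine ⟨?_, ?_, ?_⟩
  · intro i j
    have h1 := (hX2 i j).1; have h2 := (hX2 i j).2
    have h3 := (hY2 i j).1; have h4 := (hY2 i j).2
    have : ∑ i' ∈ Finset.Iic i, (a • X + b • Y) i' j
        = a * (∑ i' ∈ Finset.Iic i, X i' j) + b * (∑ i' ∈ Finset.Iic i, Y i' j) := by
      have := key (Finset.Iic i) (fun i' => X i' j) (fun i' => Y i' j)
      simpa using this
    rw [this]
    constructor
    · have := mul_nonneg ha h1; have := mul_nonneg hb h3; linarith
    · nlinarith
  · intro i
    have : ∑ j, (a • X + b • Y) i j = a * (∑ j, X i j) + b * (∑ j, Y i j) := by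
      have := key Finset.univ (fun j => X i j) (fun j => Y i j)
      simpa using this
    rw [this, hX3 i, hY3 i]; linarith
  · intro j
    have : ∑ i, (a • X + b • Y) i j = a * (∑ i, X i j) + b * (∑ i, Y i j) := by
      have := key Finset.univ (fun i => X i j) (fun i => Y i j)
      simpa using this
    rw [this, hX4 j, hY4 j]; linarith

lemma asm_subset_Cset (n : ℕ) : {X : Fin n → Fin n → ℝ | IsASM n X} ⊆ Cset n := by
  intro X hX
  obtain ⟨h1, h2, h3, h4, h5⟩ := hX
  refine ⟨fun i j => ?_, fun i j => ?_, h4, h5⟩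
  · rcases h2 i j with h | h <;> rw [h] <;> norm_num
  · rcases h3 i j with h | h <;> rw [h] <;> norm_num

lemma hull_mem_Cset {n : ℕ} {X : Fin n → Fin n → ℝ}
    (hX : X ∈ convexHull ℝ {X : Fin n → Fin n → ℝ | IsASM n X}) : X ∈ Cset n :=
  convexHull_min (asm_subset_Cset n) (convex_Cset n) hX

/-- build the Good structure from RHS membership data -/
lemma build_good {n k : ℕ} (hn : n = 2 * k + 1) {W : Fin n → Fin n → ℝ}
    (hC : W ∈ Cset n)
    (hv : ∀ i j, W i j = W i j.rev)
    (hhs : ∀ i j, W i j = W i.rev j)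
    (hm : ∀ i : Fin n, W i ⟨n / 2, Nat.div_lt_self (by omega) (by omega)⟩ = (-1) ^ (i : ℕ) ∧
      W ⟨n / 2, Nat.div_lt_self (by omega) (by omega)⟩ i = (-1) ^ (i : ℕ)) :
    Good n k W := by
  obtain ⟨hC1, hC2, hC3, hC4⟩ := hC
  have hk : n / 2 = k := by omega
  constructor
  · -- rlo
    intro a b ha hb
    rcases Nat.eq_zero_or_pos b with rfl | hbpos
    · simp [rp]
    · have hb1 : b - 1 < n := by omega
      have := (hC1 ⟨a, ha⟩ ⟨b - 1, hb1⟩).1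
      rw [sum_Iic_eq_rp] at this
      simpa [Nat.sub_add_cancel hbpos] using this
  · intro a b ha hb
    rcases Nat.eq_zero_or_pos b with rfl | hbpos
    · simp [rp]
    · have hb1 : b - 1 < n := by omega
      have := (hC1 ⟨a, ha⟩ ⟨b - 1, hb1⟩).2
      rw [sum_Iic_eq_rp] at this
      simpa [Nat.sub_add_cancel hbpos] using this
  · intro a ha
    have := hC3 ⟨a, ha⟩
    rw [sum_univ_eq_rp] at this
    simpa using this
  · intro a b ha hb
    rcases Nat.eq_zero_or_pos a with rfl | hapos
    · simp [cp]
    · have ha1 : a - 1 < n := by omega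
      have := (hC2 ⟨a - 1, ha1⟩ ⟨b, hb⟩).1
      rw [sum_Iic_eq_cp] at this
      simpa [Nat.sub_add_cancel hapos] using this
  · intro a b ha hb
    rcases Nat.eq_zero_or_pos a with rfl | hapos
    · simp [cp]
    · have ha1 : a - 1 < n := by omega
      have := (hC2 ⟨a - 1, ha1⟩ ⟨b, hb⟩).2
      rw [sum_Iic_eq_cp] at this
      simpa [Nat.sub_add_cancel hapos] using this
  · intro b hb
    have := hC4 ⟨b, hb⟩
    rw [sum_univ_eq_cp] at this
    simpa using this
  · -- vsym
    intro a b ha hb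
    have hrev : (⟨b, hb⟩ : Fin n).rev = ⟨n - 1 - b, by omega⟩ := by
      apply Fin.ext
      rw [Fin.val_rev]
      simp only []
      omega
    have := hv ⟨a, ha⟩ ⟨b, hb⟩
    rw [hrev] at this
    simpa [ex, ha, hb, show n - 1 - b < n by omega] using this
  · intro a b ha hb
    have hrev : (⟨a, ha⟩ : Fin n).rev = ⟨n - 1 - a, by omega⟩ := by
      apply Fin.ext
      rw [Fin.val_rev]
      simp only []
      omega
    have := hhs ⟨a, ha⟩ ⟨b, hb⟩
    rw [hrev] at this
    simpa [ex, ha, hb, show n - 1 - a < n by omega] using this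
  · intro a ha
    have := (hm ⟨a, ha⟩).1
    have hkk : k < n := by omega
    simpa [ex, ha, hkk, hk] using this
  · intro b hb
    have := (hm ⟨b, hb⟩).2
    have hkk : k < n := by omega
    simpa [ex, hb, hkk, hk] using this

end Convert

section BaseCase
open Finset

variable {n k : ℕ} {W : Fin n → Fin n → ℝ}

lemma int_all (hG : Good n k W) (hn : n = 2 * k + 1)
    (hq : ∀ a b, a ≤ k → b ≤ k → ∃ m : ℤ, hh n W a b = m) :
    ∀ a b, a ≤ n → b ≤ n → ∃ m : ℤ, hh n W a b = m := by
  have step1 : ∀ a b, a ≤ n → b ≤ k → ∃ m : ℤ, hh n W a b = m := by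
    intro a b ha hb
    rcases le_or_gt a k with hak | hak
    · exact hq a b hak hb
    · obtain ⟨m, hm⟩ := hq (n - a) b (by omega) hb
      have := hh_hreflect hG (n - a) b (by omega) (by omega)
      rw [show n - (n - a) = a by omega] at this
      exact ⟨b - m, by rw [this, hm]; push_cast; ring⟩
  intro a b ha hb
  rcases le_or_gt b k with hbk | hbk
  · exact step1 a b ha hbk
  · obtain ⟨m, hm⟩ := step1 a (n - b) ha (by omega)
    have := hh_vreflect hG a (n - b) ha (by omega)
    rw [show n - (n - b) = b by omega] at this
    exact ⟨a - m, by rw [this, hm]; push_cast; ring⟩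

lemma rp01 (hG : Good n k W) (hn : n = 2 * k + 1)
    (hq : ∀ a b, a ≤ k → b ≤ k → ∃ m : ℤ, hh n W a b = m)
    (a b : ℕ) (ha : a < n) (hb : b ≤ n) : rp n W a b = 0 ∨ rp n W a b = 1 := by
  obtain ⟨m1, hm1⟩ := int_all hG hn hq (a + 1) b (by omega) hb
  obtain ⟨m2, hm2⟩ := int_all hG hn hq a b (by omega) hb
  have hd : rp n W a b = (m1 - m2 : ℤ) := by
    rw [← hh_vdiff n W a b, hm1, hm2]; push_cast; ring
  have h0 := hG.rlo a b ha hb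
  have h1 := hG.rhi a b ha hb
  rw [hd] at h0 h1 ⊢
  have : m1 - m2 = 0 ∨ m1 - m2 = 1 := by
    have l0 : (0 : ℤ) ≤ m1 - m2 := by exact_mod_cast h0
    have l1 : (m1 - m2 : ℤ) ≤ 1 := by exact_mod_cast h1
    omega
  rcases this with h | h <;> rw [h] <;> simp [h]

lemma cp01 (hG : Good n k W) (hn : n = 2 * k + 1)
    (hq : ∀ a b, a ≤ k → b ≤ k → ∃ m : ℤ, hh n W a b = m)
    (a b : ℕ) (ha : a ≤ n) (hb : b < n) : cp n W a b = 0 ∨ cp n W a b = 1 := by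
  obtain ⟨m1, hm1⟩ := int_all hG hn hq a (b + 1) ha (by omega)
  obtain ⟨m2, hm2⟩ := int_all hG hn hq a b ha (by omega)
  have hd : cp n W a b = (m1 - m2 : ℤ) := by
    rw [← hh_hdiff n W a b, hm1, hm2]; push_cast; ring
  have h0 := hG.clo a b ha hb
  have h1 := hG.chi a b ha hb
  rw [hd] at h0 h1 ⊢
  have : m1 - m2 = 0 ∨ m1 - m2 = 1 := by
    have l0 : (0 : ℤ) ≤ m1 - m2 := by exact_mod_cast h0
    have l1 : (m1 - m2 : ℤ) ≤ 1 := by exact_mod_cast h1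
    omega
  rcases this with h | h <;> rw [h] <;> simp [h]

lemma base_isASM (hG : Good n k W) (hn : n = 2 * k + 1)
    (hq : ∀ a b, a ≤ k → b ≤ k → ∃ m : ℤ, hh n W a b = m) : IsASM n W := by
  refine ⟨?_, ?_, ?_, ?_, ?_⟩
  · intro i j
    have hstep : W i j = rp n W i (j + 1) - rp n W i j := by
      simp only [rp]
      rw [Finset.sum_range_succ, ex_apply]
      ring
    rcases rp01 hG hn hq i (j + 1) i.isLt (by omega) with h1 | h1 <;>
      rcases rp01 hG hn hq i j i.isLt (by omega) with h2 | h2 <;>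
      rw [hstep, h1, h2] <;> norm_num
  · intro i j
    rw [sum_Iic_eq_rp]
    exact rp01 hG hn hq i (j + 1) i.isLt (by omega)
  · intro i j
    rw [sum_Iic_eq_cp]
    exact cp01 hG hn hq (i + 1) j (by omega) j.isLt
  · intro i
    rw [sum_univ_eq_rp]
    exact hG.rfull i i.isLt
  · intro j
    rw [sum_univ_eq_cp]
    exact hG.cfull j j.isLt

end BaseCase

section Pert
open Finset

variable (n k : ℕ) (W : Fin n → Fin n → ℝ)

/-- set of quadrant positions where the corner sum is not an integer -/
noncomputable def fracSet : Finset (ℕ × ℕ) :=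
  @Finset.filter _ (fun p => ¬∃ m : ℤ, hh n W p.1 p.2 = m) (Classical.decPred _)
    (Finset.range (k + 1) ×ˢ Finset.range (k + 1))

/-- indicator of the fractional set -/
noncomputable def ch (a b : ℕ) : ℝ := if (a, b) ∈ fracSet n k W then 1 else 0

/-- symmetrized height perturbation -/
noncomputable def Dl (a b : ℕ) : ℝ :=
  ch n k W a b - ch n k W a (n - b) - ch n k W (n - a) b + ch n k W (n - a) (n - b)

/-- matrix perturbation: mixed second difference of `Dl` -/
noncomputable def DD : Fin n → Fin n → ℝ := fun i j =>
  Dl n k W (i + 1) (j + 1) - Dl n k W i (j + 1) - Dl n k W (i + 1) j + Dl n k W i j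

/-- the perturbed matrix -/
noncomputable def pert (e : ℝ) : Fin n → Fin n → ℝ := fun i j => W i j + e * DD n k W i j

variable {n k W}

lemma mem_fracSet {p : ℕ × ℕ} :
    p ∈ fracSet n k W ↔ p.1 ≤ k ∧ p.2 ≤ k ∧ ¬∃ m : ℤ, hh n W p.1 p.2 = m := by
  classical
  unfold fracSet
  simp only [Finset.mem_filter, Finset.mem_product, Finset.mem_range]
  constructor
  · rintro ⟨⟨h1, h2⟩, h3⟩; exact ⟨by omega, by omega, h3⟩
  · rintro ⟨h1, h2, h3⟩; exact ⟨⟨by omega, by omega⟩, h3⟩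

lemma ch_out_row {a : ℕ} (ha : k < a) (b : ℕ) : ch n k W a b = 0 := by
  rw [ch, if_neg]
  rw [mem_fracSet]
  push_neg
  intro h
  omega

lemma ch_out_col {b : ℕ} (hb : k < b) (a : ℕ) : ch n k W a b = 0 := by
  rw [ch, if_neg]
  rw [mem_fracSet]
  push_neg
  intro _ h
  omega

lemma ch_int {a b : ℕ} (h : ∃ m : ℤ, hh n W a b = m) : ch n k W a b = 0 := by
  rw [ch, if_neg]
  rw [mem_fracSet]
  push_neg
  intro _ _
  exact h

lemma ch_fold_col (hG : Good n k W) (hn : n = 2 * k + 1) (a : ℕ) : ch n k W a k = 0 := by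
  rcases le_or_gt a k with h | h
  · exact ch_int (hh_fold_col hG hn a (by omega))
  · exact ch_out_row h k

lemma ch_fold_row (hG : Good n k W) (hn : n = 2 * k + 1) (b : ℕ) : ch n k W k b = 0 := by
  rcases le_or_gt b k with h | h
  · exact ch_int (hh_fold_row hG hn b (by omega))
  · exact ch_out_col h k

lemma ch_zero_row (b : ℕ) : ch n k W 0 b = 0 ∨ (0, b) ∈ fracSet n k W := by
  by_cases h : (0, b) ∈ fracSet n k W
  · exact Or.inr h
  · exact Or.inl (by rw [ch, if_neg h])

lemma Dl_left_zero (hn : n = 2 * k + 1) (b : ℕ) : Dl n k W 0 b = 0 := by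
  have h0 : ∀ y, ch n k W 0 y = 0 := fun y => ch_int ⟨0, by rw [hh_zero_left]; norm_num⟩
  have hn' : ∀ y, ch n k W (n - 0) y = 0 := fun y => ch_out_row (by omega) y
  rw [Dl, h0, h0, hn', hn']
  ring

lemma Dl_right_zero (hn : n = 2 * k + 1) (a : ℕ) : Dl n k W a 0 = 0 := by
  have h0 : ∀ x, ch n k W x 0 = 0 := fun x => ch_int ⟨0, by rw [hh_zero_right]; norm_num⟩
  have hn' : ∀ x, ch n k W x (n - 0) = 0 := fun x => ch_out_col (by omega) x
  rw [Dl, h0, h0, hn', hn']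
  ring

lemma Dl_left_n (hn : n = 2 * k + 1) (b : ℕ) : Dl n k W n b = 0 := by
  have h1 : ∀ y, ch n k W n y = 0 := fun y => ch_out_row (by omega) y
  have h2 : ∀ y, ch n k W (n - n) y = 0 := fun y => ch_int ⟨0, by rw [Nat.sub_self, hh_zero_left]; norm_num⟩
  rw [Dl, h1, h1, h2, h2]
  ring

lemma Dl_right_n (hn : n = 2 * k + 1) (a : ℕ) : Dl n k W a n = 0 := by
  have h1 : ∀ x, ch n k W x n = 0 := fun x => ch_out_col (by omega) x
  have h2 : ∀ x, ch n k W x (n - n) = 0 := fun x => ch_int ⟨0, by rw [Nat.sub_self, hh_zero_right]; norm_num⟩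
  rw [Dl, h1, h1, h2, h2]
  ring

lemma Dl_fold_col (hG : Good n k W) (hn : n = 2 * k + 1) (a : ℕ) :
    Dl n k W a k = 0 ∧ Dl n k W a (k + 1) = 0 := by
  have hnk : n - k = k + 1 := by omega
  have hnk1 : n - (k + 1) = k := by omega
  constructor
  · rw [Dl, hnk, ch_fold_col hG hn, ch_fold_col hG hn, ch_out_col (by omega) a,
      ch_out_col (by omega) (n - a)]
    ring
  · rw [Dl, hnk1, ch_fold_col hG hn, ch_fold_col hG hn, ch_out_col (by omega) a,
      ch_out_col (by omega) (n - a)]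
    ring

lemma Dl_fold_row (hG : Good n k W) (hn : n = 2 * k + 1) (b : ℕ) :
    Dl n k W k b = 0 ∧ Dl n k W (k + 1) b = 0 := by
  have hnk : n - k = k + 1 := by omega
  have hnk1 : n - (k + 1) = k := by omega
  constructor
  · rw [Dl, hnk, ch_fold_row hG hn, ch_fold_row hG hn, ch_out_row (by omega) b,
      ch_out_row (by omega) (n - b)]
    ring
  · rw [Dl, hnk1, ch_fold_row hG hn, ch_fold_row hG hn, ch_out_row (by omega) b,
      ch_out_row (by omega) (n - b)]
    ring

lemma Dl_vreflect (hn : n = 2 * k + 1) (a : ℕ) {b : ℕ} (hb : b ≤ n) :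
    Dl n k W a (n - b) = - Dl n k W a b := by
  rw [Dl, Dl, show n - (n - b) = b by omega]
  ring

lemma Dl_hreflect (hn : n = 2 * k + 1) {a : ℕ} (ha : a ≤ n) (b : ℕ) :
    Dl n k W (n - a) b = - Dl n k W a b := by
  rw [Dl, Dl, show n - (n - a) = a by omega]
  ring

lemma Dl_quadrant {a b : ℕ} (hn : n = 2 * k + 1) (ha : a ≤ k) (hb : b ≤ k) :
    Dl n k W a b = ch n k W a b := by
  rw [Dl, ch_out_col (show k < n - b by omega) a, ch_out_row (show k < n - a by omega) b,
    ch_out_row (show k < n - a by omega) (n - b)]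
  ring

/-- corner sums of the perturbed matrix -/
lemma hh_pert (hn : n = 2 * k + 1) (e : ℝ) {a b : ℕ} (ha : a ≤ n) (hb : b ≤ n) :
    hh n (pert n k W e) a b = hh n W a b + e * Dl n k W a b := by
  have hex : ∀ i j, i < n → j < n →
      ex n (pert n k W e) i j = ex n W i j +
        e * (Dl n k W (i + 1) (j + 1) - Dl n k W i (j + 1) - Dl n k W (i + 1) j + Dl n k W i j) := by
    intro i j hi hj
    unfold ex pert DD
    rw [dif_pos ⟨hi, hj⟩, dif_pos ⟨hi, hj⟩]
  have inner : ∀ i, i < n →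
      rp n (pert n k W e) i b = rp n W i b +
        e * ((Dl n k W (i + 1) b - Dl n k W i b) - (Dl n k W (i + 1) 0 - Dl n k W i 0)) := by
    intro i hi
    rw [rp, rp]
    have : ∀ j ∈ Finset.range b, ex n (pert n k W e) i j = ex n W i j +
        e * ((fun t => Dl n k W (i + 1) t - Dl n k W i t) (j + 1)
           - (fun t => Dl n k W (i + 1) t - Dl n k W i t) j) := by
      intro j hj
      have hjn : j < n := lt_of_lt_of_le (Finset.mem_range.mp hj) hb
      rw [hex i j hi hjn]
      simp only []
      ring
    rw [Finset.sum_congr rfl this, Finset.sum_add_distrib, ← Finset.mul_sum,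
      Finset.sum_range_sub (fun t => Dl n k W (i + 1) t - Dl n k W i t) b]
  rw [hh, hh]
  have : ∀ i ∈ Finset.range a, rp n (pert n k W e) i b = rp n W i b +
      e * ((fun t => Dl n k W t b) (i+1) - (fun t => Dl n k W t b) i)
      - e * ((fun t => Dl n k W t 0) (i+1) - (fun t => Dl n k W t 0) i) := by
    intro i hi
    have hin : i < n := lt_of_lt_of_le (Finset.mem_range.mp hi) ha
    rw [inner i hin]
    simp only []
    ring
  rw [Finset.sum_congr rfl this]
  rw [Finset.sum_sub_distrib, Finset.sum_add_distrib, ← Finset.mul_sum, ← Finset.mul_sum,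
    Finset.sum_range_sub (fun t => Dl n k W t b) a, Finset.sum_range_sub (fun t => Dl n k W t 0) a]
  rw [Dl_left_zero hn, Dl_left_zero hn, Dl_right_zero hn]
  ring

end Pert

section EdgeAnalysis
open Finset

variable {n k : ℕ} {W : Fin n → Fin n → ℝ}

lemma interval_pert (x y e cx cy : ℝ) (c : ℤ)
    (hx : (cx = 0 ∧ ∃ m : ℤ, x = m) ∨ (cx = 1 ∧ (⌊x⌋ : ℝ) ≤ x + e ∧ x + e ≤ ⌈x⌉))
    (hy : (cy = 0 ∧ ∃ m : ℤ, y = m) ∨ (cy = 1 ∧ (⌊y⌋ : ℝ) ≤ y + e ∧ y + e ≤ ⌈y⌉))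
    (h0 : 0 ≤ x - y + c) (h1 : x - y + c ≤ 1) :
    0 ≤ x - y + c + e * (cx - cy) ∧ x - y + c + e * (cx - cy) ≤ 1 := by
  rcases hx with ⟨hcx, mx, hmx⟩ | ⟨hcx, hxl, hxu⟩ <;>
    rcases hy with ⟨hcy, my, hmy⟩ | ⟨hcy, hyl, hyu⟩
  · rw [hcx, hcy]
    constructor <;> nlinarith
  · -- cx = 0, cy = 1
    rw [hcx, hcy]
    have hup : ((mx - ⌊y⌋ + c : ℤ) : ℝ) < 2 := by
      have := Int.sub_one_lt_floor y
      push_cast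
      linarith
    have hup' : (mx - ⌊y⌋ + c : ℤ) ≤ 1 := by
      have h2 : (mx - ⌊y⌋ + c : ℤ) < 2 := by exact_mod_cast hup
      omega
    have hup'' : ((mx - ⌊y⌋ + c : ℤ) : ℝ) ≤ 1 := by exact_mod_cast hup'
    have hlo : (-1 : ℝ) < ((mx - ⌈y⌉ + c : ℤ) : ℝ) := by
      have := Int.ceil_lt_add_one y
      push_cast
      linarith
    have hlo' : (0 : ℤ) ≤ mx - ⌈y⌉ + c := by
      have h2 : (-1 : ℤ) < mx - ⌈y⌉ + c := by exact_mod_cast hlo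
      omega
    have hlo'' : (0 : ℝ) ≤ ((mx - ⌈y⌉ + c : ℤ) : ℝ) := by exact_mod_cast hlo'
    push_cast at hup'' hlo''
    constructor <;> nlinarith
  · -- cx = 1, cy = 0
    rw [hcx, hcy]
    have hup : ((⌈x⌉ - my + c : ℤ) : ℝ) < 2 := by
      have := Int.ceil_lt_add_one x
      push_cast
      linarith
    have hup' : (⌈x⌉ - my + c : ℤ) ≤ 1 := by
      have h2 : (⌈x⌉ - my + c : ℤ) < 2 := by exact_mod_cast hup
      omega
    have hup'' : ((⌈x⌉ - my + c : ℤ) : ℝ) ≤ 1 := by exact_mod_cast hup'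
    have hlo : (-1 : ℝ) < ((⌊x⌋ - my + c : ℤ) : ℝ) := by
      have := Int.sub_one_lt_floor x
      push_cast
      linarith
    have hlo' : (0 : ℤ) ≤ ⌊x⌋ - my + c := by
      have h2 : (-1 : ℤ) < ⌊x⌋ - my + c := by exact_mod_cast hlo
      omega
    have hlo'' : (0 : ℝ) ≤ ((⌊x⌋ - my + c : ℤ) : ℝ) := by exact_mod_cast hlo'
    push_cast at hup'' hlo''
    constructor <;> nlinarith
  · rw [hcx, hcy]
    constructor <;> nlinarith

/-- the hypothesis on the perturbation size -/
def EOK (n k : ℕ) (W : Fin n → Fin n → ℝ) (e : ℝ) : Prop :=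
  ∀ p ∈ fracSet n k W, (⌊hh n W p.1 p.2⌋ : ℝ) ≤ hh n W p.1 p.2 + e ∧
    hh n W p.1 p.2 + e ≤ ⌈hh n W p.1 p.2⌉

lemma chi_status {e : ℝ} (he : EOK n k W e) {a b : ℕ} (ha : a ≤ k) (hb : b ≤ k) :
    (ch n k W a b = 0 ∧ ∃ m : ℤ, hh n W a b = m) ∨
    (ch n k W a b = 1 ∧ (⌊hh n W a b⌋ : ℝ) ≤ hh n W a b + e ∧ hh n W a b + e ≤ ⌈hh n W a b⌉) := by
  by_cases h : (a, b) ∈ fracSet n k W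
  · right
    constructor
    · rw [ch, if_pos h]
    · have := he (a, b) h
      exact this
  · refine Or.inl ⟨by rw [ch, if_neg h], ?_⟩
    by_contra h'
    exact h (mem_fracSet.mpr ⟨ha, hb, h'⟩)

lemma rp_pert_bounds (hG : Good n k W) (hn : n = 2 * k + 1) {e : ℝ} (he : EOK n k W e)
    (a b : ℕ) (ha : a < n) (hb : b ≤ n) :
    0 ≤ rp n W a b + e * (Dl n k W (a + 1) b - Dl n k W a b) ∧
    rp n W a b + e * (Dl n k W (a + 1) b - Dl n k W a b) ≤ 1 := by
  have hbase0 : 0 ≤ rp n W a b := hG.rlo a b ha hb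
  have hbase1 : rp n W a b ≤ 1 := hG.rhi a b ha hb
  rcases le_or_gt b k with hbk | hbk
  · rcases show a + 1 ≤ k ∨ a = k ∨ k + 1 ≤ a by omega with hak | hak | hak
    · -- Case A
      have h2 : rp n W a b = hh n W (a + 1) b - hh n W a b + (0 : ℤ) := by
        rw [← hh_vdiff n W a b]; push_cast; ring
      have h3 : Dl n k W (a + 1) b - Dl n k W a b = ch n k W (a + 1) b - ch n k W a b := by
        rw [Dl_quadrant hn hak hbk, Dl_quadrant hn (by omega : a ≤ k) hbk]
      obtain ⟨L, U⟩ := interval_pert (hh n W (a + 1) b) (hh n W a b) e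
        (ch n k W (a + 1) b) (ch n k W a b) 0
        (chi_status he hak hbk) (chi_status he (by omega) hbk)
        (by rw [← h2]; exact hbase0) (by rw [← h2]; exact hbase1)
      rw [h2, h3]
      exact ⟨L, U⟩
    · -- Case B: a = k
      have h3 : Dl n k W (a + 1) b - Dl n k W a b = 0 := by
        rw [hak, (Dl_fold_row hG hn b).1, (Dl_fold_row hG hn b).2]; ring
      rw [h3]
      constructor <;> nlinarith
    · -- Case C: k + 1 ≤ a
      have hna : n - a ≤ k := by omega
      have hna1 : n - a - 1 ≤ k := by omega
      have e1 : hh n W a b = b - hh n W (n - a) b := by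
        have := hh_hreflect hG (n - a) b (by omega) hb
        rw [show n - (n - a) = a by omega] at this
        linarith
      have e2 : hh n W (a + 1) b = b - hh n W (n - a - 1) b := by
        have := hh_hreflect hG (n - a - 1) b (by omega) hb
        rw [show n - (n - a - 1) = a + 1 by omega] at this
        linarith
      have h2 : rp n W a b = hh n W (n - a) b - hh n W (n - a - 1) b + (0 : ℤ) := by
        have := hh_vdiff n W a b
        push_cast
        linarith
      have d1 : Dl n k W a b = - ch n k W (n - a) b := by
        have := Dl_hreflect (W := W) hn (show n - a ≤ n by omega) b
        rw [show n - (n - a) = a by omega] at this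
        rw [this, Dl_quadrant hn hna hbk]
      have d2 : Dl n k W (a + 1) b = - ch n k W (n - a - 1) b := by
        have := Dl_hreflect (W := W) hn (show n - a - 1 ≤ n by omega) b
        rw [show n - (n - a - 1) = a + 1 by omega] at this
        rw [this, Dl_quadrant hn hna1 hbk]
      have h3 : Dl n k W (a + 1) b - Dl n k W a b
          = ch n k W (n - a) b - ch n k W (n - a - 1) b := by
        rw [d1, d2]; ring
      obtain ⟨L, U⟩ := interval_pert (hh n W (n - a) b) (hh n W (n - a - 1) b) e
        (ch n k W (n - a) b) (ch n k W (n - a - 1) b) 0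
        (chi_status he hna hbk) (chi_status he hna1 hbk)
        (by rw [← h2]; exact hbase0) (by rw [← h2]; exact hbase1)
      rw [h2, h3]
      exact ⟨L, U⟩
  · -- b ≥ k + 1
    have hnb : n - b ≤ k := by omega
    rcases show a + 1 ≤ k ∨ a = k ∨ k + 1 ≤ a by omega with hak | hak | hak
    · -- Case D
      have e1 : hh n W a b = a - hh n W a (n - b) := by
        have := hh_vreflect hG a (n - b) (by omega) (by omega)
        rw [show n - (n - b) = b by omega] at this
        linarith
      have e2 : hh n W (a + 1) b = (a + 1) - hh n W (a + 1) (n - b) := by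
        have := hh_vreflect hG (a + 1) (n - b) (by omega) (by omega)
        rw [show n - (n - b) = b by omega] at this
        push_cast at this ⊢
        linarith
      have h2 : rp n W a b = hh n W a (n - b) - hh n W (a + 1) (n - b) + (1 : ℤ) := by
        have := hh_vdiff n W a b
        push_cast
        linarith
      have d1 : Dl n k W a b = - ch n k W a (n - b) := by
        have := Dl_vreflect (W := W) hn a (show n - b ≤ n by omega)
        rw [show n - (n - b) = b by omega] at this
        rw [this, Dl_quadrant hn (by omega : a ≤ k) hnb]
      have d2 : Dl n k W (a + 1) b = - ch n k W (a + 1) (n - b) := by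
        have := Dl_vreflect (W := W) hn (a + 1) (show n - b ≤ n by omega)
        rw [show n - (n - b) = b by omega] at this
        rw [this, Dl_quadrant hn hak hnb]
      have h3 : Dl n k W (a + 1) b - Dl n k W a b
          = ch n k W a (n - b) - ch n k W (a + 1) (n - b) := by
        rw [d1, d2]; ring
      obtain ⟨L, U⟩ := interval_pert (hh n W a (n - b)) (hh n W (a + 1) (n - b)) e
        (ch n k W a (n - b)) (ch n k W (a + 1) (n - b)) 1
        (chi_status he (by omega) hnb) (chi_status he hak hnb)
        (by rw [← h2]; exact hbase0) (by rw [← h2]; exact hbase1)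
      rw [h2, h3]
      exact ⟨L, U⟩
    · -- Case E: a = k
      have h3 : Dl n k W (a + 1) b - Dl n k W a b = 0 := by
        rw [hak, (Dl_fold_row hG hn b).1, (Dl_fold_row hG hn b).2]; ring
      rw [h3]
      constructor <;> nlinarith
    · -- Case F
      have hna : n - a ≤ k := by omega
      have hna1 : n - a - 1 ≤ k := by omega
      have e0 : hh n W a (n - b) = (n - b : ℕ) - hh n W (n - a) (n - b) := by
        have := hh_hreflect hG (n - a) (n - b) (by omega) (by omega)
        rw [show n - (n - a) = a by omega] at this
        linarith
      have e0' : hh n W (a + 1) (n - b) = (n - b : ℕ) - hh n W (n - a - 1) (n - b) := by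
        have := hh_hreflect hG (n - a - 1) (n - b) (by omega) (by omega)
        rw [show n - (n - a - 1) = a + 1 by omega] at this
        linarith
      have e1 : hh n W a b = a - hh n W a (n - b) := by
        have := hh_vreflect hG a (n - b) (by omega) (by omega)
        rw [show n - (n - b) = b by omega] at this
        linarith
      have e2 : hh n W (a + 1) b = (a + 1) - hh n W (a + 1) (n - b) := by
        have := hh_vreflect hG (a + 1) (n - b) (by omega) (by omega)
        rw [show n - (n - b) = b by omega] at this
        push_cast at this ⊢
        linarith
      have h2 : rp n W a b = hh n W (n - a - 1) (n - b) - hh n W (n - a) (n - b) + (1 : ℤ) := by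
        have := hh_vdiff n W a b
        push_cast
        linarith
      have d1 : Dl n k W a b = ch n k W (n - a) (n - b) := by
        have hv := Dl_vreflect (W := W) hn a (show n - b ≤ n by omega)
        rw [show n - (n - b) = b by omega] at hv
        have hh' := Dl_hreflect (W := W) hn (show n - a ≤ n by omega) (n - b)
        rw [show n - (n - a) = a by omega] at hh'
        rw [hv, hh', Dl_quadrant hn hna hnb]
        ring
      have d2 : Dl n k W (a + 1) b = ch n k W (n - a - 1) (n - b) := by
        have hv := Dl_vreflect (W := W) hn (a + 1) (show n - b ≤ n by omega)
        rw [show n - (n - b) = b by omega] at hv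
        have hh' := Dl_hreflect (W := W) hn (show n - a - 1 ≤ n by omega) (n - b)
        rw [show n - (n - a - 1) = a + 1 by omega] at hh'
        rw [hv, hh', Dl_quadrant hn hna1 hnb]
        ring
      have h3 : Dl n k W (a + 1) b - Dl n k W a b
          = ch n k W (n - a - 1) (n - b) - ch n k W (n - a) (n - b) := by
        rw [d1, d2]
      obtain ⟨L, U⟩ := interval_pert (hh n W (n - a - 1) (n - b)) (hh n W (n - a) (n - b)) e
        (ch n k W (n - a - 1) (n - b)) (ch n k W (n - a) (n - b)) 1
        (chi_status he hna1 hnb) (chi_status he hna hnb)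
        (by rw [← h2]; exact hbase0) (by rw [← h2]; exact hbase1)
      rw [h2, h3]
      exact ⟨L, U⟩

end EdgeAnalysis

section EdgeAnalysis2
open Finset

variable {n k : ℕ} {W : Fin n → Fin n → ℝ}

lemma cp_pert_bounds (hG : Good n k W) (hn : n = 2 * k + 1) {e : ℝ} (he : EOK n k W e)
    (a b : ℕ) (ha : a ≤ n) (hb : b < n) :
    0 ≤ cp n W a b + e * (Dl n k W a (b + 1) - Dl n k W a b) ∧
    cp n W a b + e * (Dl n k W a (b + 1) - Dl n k W a b) ≤ 1 := by
  have hbase0 : 0 ≤ cp n W a b := hG.clo a b ha hb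
  have hbase1 : cp n W a b ≤ 1 := hG.chi a b ha hb
  rcases le_or_gt a k with hak | hak
  · rcases show b + 1 ≤ k ∨ b = k ∨ k + 1 ≤ b by omega with hbk | hbk | hbk
    · -- Case A'
      have h2 : cp n W a b = hh n W a (b + 1) - hh n W a b + (0 : ℤ) := by
        rw [← hh_hdiff n W a b]; push_cast; ring
      have h3 : Dl n k W a (b + 1) - Dl n k W a b = ch n k W a (b + 1) - ch n k W a b := by
        rw [Dl_quadrant hn hak hbk, Dl_quadrant hn hak (by omega : b ≤ k)]
      obtain ⟨L, U⟩ := interval_pert (hh n W a (b + 1)) (hh n W a b) e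
        (ch n k W a (b + 1)) (ch n k W a b) 0
        (chi_status he hak hbk) (chi_status he hak (by omega))
        (by rw [← h2]; exact hbase0) (by rw [← h2]; exact hbase1)
      rw [h2, h3]
      exact ⟨L, U⟩
    · -- Case B': b = k
      have h3 : Dl n k W a (b + 1) - Dl n k W a b = 0 := by
        rw [hbk, (Dl_fold_col hG hn a).1, (Dl_fold_col hG hn a).2]; ring
      rw [h3]
      constructor <;> nlinarith
    · -- Case C': k + 1 ≤ b
      have hnb : n - b ≤ k := by omega
      have hnb1 : n - b - 1 ≤ k := by omega
      have e1 : hh n W a b = a - hh n W a (n - b) := by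
        have := hh_vreflect hG a (n - b) ha (by omega)
        rw [show n - (n - b) = b by omega] at this
        linarith
      have e2 : hh n W a (b + 1) = a - hh n W a (n - b - 1) := by
        have := hh_vreflect hG a (n - b - 1) ha (by omega)
        rw [show n - (n - b - 1) = b + 1 by omega] at this
        linarith
      have h2 : cp n W a b = hh n W a (n - b) - hh n W a (n - b - 1) + (0 : ℤ) := by
        have := hh_hdiff n W a b
        push_cast
        linarith
      have d1 : Dl n k W a b = - ch n k W a (n - b) := by
        have := Dl_vreflect (W := W) hn a (show n - b ≤ n by omega)
        rw [show n - (n - b) = b by omega] at this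
        rw [this, Dl_quadrant hn hak hnb]
      have d2 : Dl n k W a (b + 1) = - ch n k W a (n - b - 1) := by
        have := Dl_vreflect (W := W) hn a (show n - b - 1 ≤ n by omega)
        rw [show n - (n - b - 1) = b + 1 by omega] at this
        rw [this, Dl_quadrant hn hak hnb1]
      have h3 : Dl n k W a (b + 1) - Dl n k W a b
          = ch n k W a (n - b) - ch n k W a (n - b - 1) := by
        rw [d1, d2]; ring
      obtain ⟨L, U⟩ := interval_pert (hh n W a (n - b)) (hh n W a (n - b - 1)) e
        (ch n k W a (n - b)) (ch n k W a (n - b - 1)) 0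
        (chi_status he hak hnb) (chi_status he hak hnb1)
        (by rw [← h2]; exact hbase0) (by rw [← h2]; exact hbase1)
      rw [h2, h3]
      exact ⟨L, U⟩
  · -- a ≥ k + 1
    have hna : n - a ≤ k := by omega
    rcases show b + 1 ≤ k ∨ b = k ∨ k + 1 ≤ b by omega with hbk | hbk | hbk
    · -- Case D'
      have e1 : hh n W a b = b - hh n W (n - a) b := by
        have := hh_hreflect hG (n - a) b (by omega) (by omega)
        rw [show n - (n - a) = a by omega] at this
        linarith
      have e2 : hh n W a (b + 1) = (b + 1) - hh n W (n - a) (b + 1) := by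
        have := hh_hreflect hG (n - a) (b + 1) (by omega) (by omega)
        rw [show n - (n - a) = a by omega] at this
        push_cast at this ⊢
        linarith
      have h2 : cp n W a b = hh n W (n - a) b - hh n W (n - a) (b + 1) + (1 : ℤ) := by
        have := hh_hdiff n W a b
        push_cast
        linarith
      have d1 : Dl n k W a b = - ch n k W (n - a) b := by
        have := Dl_hreflect (W := W) hn (show n - a ≤ n by omega) b
        rw [show n - (n - a) = a by omega] at this
        rw [this, Dl_quadrant hn hna (by omega : b ≤ k)]
      have d2 : Dl n k W a (b + 1) = - ch n k W (n - a) (b + 1) := by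
        have := Dl_hreflect (W := W) hn (show n - a ≤ n by omega) (b + 1)
        rw [show n - (n - a) = a by omega] at this
        rw [this, Dl_quadrant hn hna hbk]
      have h3 : Dl n k W a (b + 1) - Dl n k W a b
          = ch n k W (n - a) b - ch n k W (n - a) (b + 1) := by
        rw [d1, d2]; ring
      obtain ⟨L, U⟩ := interval_pert (hh n W (n - a) b) (hh n W (n - a) (b + 1)) e
        (ch n k W (n - a) b) (ch n k W (n - a) (b + 1)) 1
        (chi_status he hna (by omega)) (chi_status he hna hbk)
        (by rw [← h2]; exact hbase0) (by rw [← h2]; exact hbase1)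
      rw [h2, h3]
      exact ⟨L, U⟩
    · -- Case E': b = k
      have h3 : Dl n k W a (b + 1) - Dl n k W a b = 0 := by
        rw [hbk, (Dl_fold_col hG hn a).1, (Dl_fold_col hG hn a).2]; ring
      rw [h3]
      constructor <;> nlinarith
    · -- Case F'
      have hnb : n - b ≤ k := by omega
      have hnb1 : n - b - 1 ≤ k := by omega
      have e0 : hh n W a (n - b) = (n - b : ℕ) - hh n W (n - a) (n - b) := by
        have := hh_hreflect hG (n - a) (n - b) (by omega) (by omega)
        rw [show n - (n - a) = a by omega] at this
        linarith
      have e0' : hh n W a (n - b - 1) = (n - b - 1 : ℕ) - hh n W (n - a) (n - b - 1) := by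
        have := hh_hreflect hG (n - a) (n - b - 1) (by omega) (by omega)
        rw [show n - (n - a) = a by omega] at this
        linarith
      have e1 : hh n W a b = a - hh n W a (n - b) := by
        have := hh_vreflect hG a (n - b) (by omega) (by omega)
        rw [show n - (n - b) = b by omega] at this
        linarith
      have e2 : hh n W a (b + 1) = a - hh n W a (n - b - 1) := by
        have := hh_vreflect hG a (n - b - 1) (by omega) (by omega)
        rw [show n - (n - b - 1) = b + 1 by omega] at this
        linarith
      have h2 : cp n W a b = hh n W (n - a) (n - b - 1) - hh n W (n - a) (n - b) + (1 : ℤ) := by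
        have hd := hh_hdiff n W a b
        have hc : ((n - b : ℕ) : ℝ) = ((n - b - 1 : ℕ) : ℝ) + 1 := by
          have : n - b = (n - b - 1) + 1 := by omega
          rw [this]
          push_cast
          ring
        push_cast
        linarith
      have d1 : Dl n k W a b = ch n k W (n - a) (n - b) := by
        have hv := Dl_vreflect (W := W) hn a (show n - b ≤ n by omega)
        rw [show n - (n - b) = b by omega] at hv
        have hh' := Dl_hreflect (W := W) hn (show n - a ≤ n by omega) (n - b)
        rw [show n - (n - a) = a by omega] at hh'
        rw [hv, hh', Dl_quadrant hn hna hnb]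
        ring
      have d2 : Dl n k W a (b + 1) = ch n k W (n - a) (n - b - 1) := by
        have hv := Dl_vreflect (W := W) hn a (show n - b - 1 ≤ n by omega)
        rw [show n - (n - b - 1) = b + 1 by omega] at hv
        have hh' := Dl_hreflect (W := W) hn (show n - a ≤ n by omega) (n - b - 1)
        rw [show n - (n - a) = a by omega] at hh'
        rw [hv, hh', Dl_quadrant hn hna hnb1]
        ring
      have h3 : Dl n k W a (b + 1) - Dl n k W a b
          = ch n k W (n - a) (n - b - 1) - ch n k W (n - a) (n - b) := by
        rw [d1, d2]
      obtain ⟨L, U⟩ := interval_pert (hh n W (n - a) (n - b - 1)) (hh n W (n - a) (n - b)) e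
        (ch n k W (n - a) (n - b - 1)) (ch n k W (n - a) (n - b)) 1
        (chi_status he hna hnb1) (chi_status he hna hnb)
        (by rw [← h2]; exact hbase0) (by rw [← h2]; exact hbase1)
      rw [h2, h3]
      exact ⟨L, U⟩

end EdgeAnalysis2

section GoodPert
open Finset

variable {n k : ℕ} {W : Fin n → Fin n → ℝ}

lemma ex_pert (e : ℝ) {i j : ℕ} (hi : i < n) (hj : j < n) :
    ex n (pert n k W e) i j = ex n W i j +
      e * (Dl n k W (i + 1) (j + 1) - Dl n k W i (j + 1) - Dl n k W (i + 1) j + Dl n k W i j) := by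
  unfold ex pert DD
  rw [dif_pos ⟨hi, hj⟩, dif_pos ⟨hi, hj⟩]

lemma rp_pert_eq (hn : n = 2 * k + 1) (e : ℝ) {a b : ℕ} (ha : a < n) (hb : b ≤ n) :
    rp n (pert n k W e) a b = rp n W a b + e * (Dl n k W (a + 1) b - Dl n k W a b) := by
  have h1 := hh_vdiff n (pert n k W e) a b
  have h2 := hh_vdiff n W a b
  rw [hh_pert hn e (by omega) hb, hh_pert hn e (by omega : a ≤ n) hb] at h1
  linarith

lemma cp_pert_eq (hn : n = 2 * k + 1) (e : ℝ) {a b : ℕ} (ha : a ≤ n) (hb : b < n) :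
    cp n (pert n k W e) a b = cp n W a b + e * (Dl n k W a (b + 1) - Dl n k W a b) := by
  have h1 := hh_hdiff n (pert n k W e) a b
  have h2 := hh_hdiff n W a b
  rw [hh_pert hn e ha (by omega), hh_pert hn e ha (by omega : b ≤ n)] at h1
  linarith

lemma good_pert (hG : Good n k W) (hn : n = 2 * k + 1) {e : ℝ} (he : EOK n k W e) :
    Good n k (pert n k W e) := by
  constructor
  · intro a b ha hb
    rw [rp_pert_eq hn e ha hb]
    exact (rp_pert_bounds hG hn he a b ha hb).1
  · intro a b ha hb
    rw [rp_pert_eq hn e ha hb]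
    exact (rp_pert_bounds hG hn he a b ha hb).2
  · intro a ha
    rw [rp_pert_eq hn e ha le_rfl, Dl_right_n hn, Dl_right_n hn, hG.rfull a ha]
    ring
  · intro a b ha hb
    rw [cp_pert_eq hn e ha hb]
    exact (cp_pert_bounds hG hn he a b ha hb).1
  · intro a b ha hb
    rw [cp_pert_eq hn e ha hb]
    exact (cp_pert_bounds hG hn he a b ha hb).2
  · intro b hb
    rw [cp_pert_eq hn e le_rfl hb, Dl_left_n hn, Dl_left_n hn, hG.cfull b hb]
    ring
  · -- vsym
    intro a b ha hb
    have hb' : n - 1 - b < n := by omega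
    rw [ex_pert e ha hb, ex_pert e ha hb']
    rw [← hG.vsym a b ha hb]
    have r1 : Dl n k W (a + 1) (n - 1 - b + 1) = - Dl n k W (a + 1) b := by
      rw [show n - 1 - b + 1 = n - b by omega]
      exact Dl_vreflect hn (a + 1) (show b ≤ n by omega)
    have r2 : Dl n k W a (n - 1 - b + 1) = - Dl n k W a b := by
      rw [show n - 1 - b + 1 = n - b by omega]
      exact Dl_vreflect hn a (show b ≤ n by omega)
    have r3 : Dl n k W (a + 1) (n - 1 - b) = - Dl n k W (a + 1) (b + 1) := by
      rw [show n - 1 - b = n - (b + 1) by omega]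
      exact Dl_vreflect hn (a + 1) (show b + 1 ≤ n by omega)
    have r4 : Dl n k W a (n - 1 - b) = - Dl n k W a (b + 1) := by
      rw [show n - 1 - b = n - (b + 1) by omega]
      exact Dl_vreflect hn a (show b + 1 ≤ n by omega)
    rw [r1, r2, r3, r4]
    ring
  · -- hsym
    intro a b ha hb
    have ha' : n - 1 - a < n := by omega
    rw [ex_pert e ha hb, ex_pert e ha' hb]
    rw [← hG.hsym a b ha hb]
    have r1 : Dl n k W (n - 1 - a + 1) (b + 1) = - Dl n k W a (b + 1) := by
      rw [show n - 1 - a + 1 = n - a by omega]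
      exact Dl_hreflect hn (show a ≤ n by omega) (b + 1)
    have r2 : Dl n k W (n - 1 - a + 1) b = - Dl n k W a b := by
      rw [show n - 1 - a + 1 = n - a by omega]
      exact Dl_hreflect hn (show a ≤ n by omega) b
    have r3 : Dl n k W (n - 1 - a) (b + 1) = - Dl n k W (a + 1) (b + 1) := by
      rw [show n - 1 - a = n - (a + 1) by omega]
      exact Dl_hreflect hn (show a + 1 ≤ n by omega) (b + 1)
    have r4 : Dl n k W (n - 1 - a) b = - Dl n k W (a + 1) b := by
      rw [show n - 1 - a = n - (a + 1) by omega]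
      exact Dl_hreflect hn (show a + 1 ≤ n by omega) b
    rw [r1, r2, r3, r4]
    ring
  · -- midc
    intro a ha
    have hk : k < n := by omega
    rw [ex_pert e ha hk, (Dl_fold_col hG hn (a + 1)).1, (Dl_fold_col hG hn (a + 1)).2,
      (Dl_fold_col hG hn a).1, (Dl_fold_col hG hn a).2, hG.midc a ha]
    ring
  · -- midr
    intro b hb
    have hk : k < n := by omega
    rw [ex_pert e hk hb, (Dl_fold_row hG hn (b + 1)).1, (Dl_fold_row hG hn (b + 1)).2,
      (Dl_fold_row hG hn b).1, (Dl_fold_row hG hn b).2, hG.midr b hb]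
    ring

end GoodPert

section MainInduction
open Finset

variable {n k : ℕ}

/-- the set of VHSASMs -/
def Sset (n : ℕ) : Set (Fin n → Fin n → ℝ) :=
  {X : Fin n → Fin n → ℝ |
    IsASM n X ∧ (∀ i j, X i j = X i j.rev) ∧ (∀ i j, X i j = X i.rev j)}

lemma matrix_vsym {W : Fin n → Fin n → ℝ} (hG : Good n k W) :
    ∀ i j : Fin n, W i j = W i j.rev := by
  intro i j
  have h := hG.vsym i j i.isLt j.isLt
  rw [ex_apply] at h
  have hrev : j.rev = ⟨n - 1 - (j : ℕ), by omega⟩ := by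
    apply Fin.ext
    rw [Fin.val_rev]
    simp only []
    omega
  rw [h, hrev]
  unfold ex
  rw [dif_pos ⟨i.isLt, show n - 1 - (j : ℕ) < n by omega⟩]

lemma matrix_hsym {W : Fin n → Fin n → ℝ} (hG : Good n k W) :
    ∀ i j : Fin n, W i j = W i.rev j := by
  intro i j
  have h := hG.hsym i j i.isLt j.isLt
  rw [ex_apply] at h
  have hrev : i.rev = ⟨n - 1 - (i : ℕ), by omega⟩ := by
    apply Fin.ext
    rw [Fin.val_rev]
    simp only []
    omega
  rw [h, hrev]
  unfold ex
  rw [dif_pos ⟨show n - 1 - (i : ℕ) < n by omega, j.isLt⟩]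

lemma hh_pert_quadrant {W : Fin n → Fin n → ℝ} (hn : n = 2 * k + 1) (e : ℝ)
    {a b : ℕ} (ha : a ≤ k) (hb : b ≤ k) :
    hh n (pert n k W e) a b = hh n W a b + e * ch n k W a b := by
  rw [hh_pert hn e (by omega) (by omega), Dl_quadrant hn ha hb]

lemma fracSet_pert_subset {W : Fin n → Fin n → ℝ} (hn : n = 2 * k + 1) (e : ℝ) :
    fracSet n k (pert n k W e) ⊆ fracSet n k W := by
  intro p hp
  rw [mem_fracSet] at hp
  obtain ⟨h1, h2, h3⟩ := hp
  by_cases hF : p ∈ fracSet n k W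
  · exact hF
  · exfalso
    have hint : ∃ m : ℤ, hh n W p.1 p.2 = m := by
      by_contra hc
      exact hF (mem_fracSet.mpr ⟨h1, h2, hc⟩)
    obtain ⟨m, hm⟩ := hint
    refine h3 ⟨m, ?_⟩
    rw [hh_pert_quadrant hn e h1 h2, ch, if_neg hF, hm]
    ring

lemma good_in_hull (hn : n = 2 * k + 1) :
    ∀ (N : ℕ) (W : Fin n → Fin n → ℝ), Good n k W → (fracSet n k W).card ≤ N →
      W ∈ convexHull ℝ (Sset n) := by
  intro N
  induction N with
  | zero =>
    intro W hG hcard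
    have hempty : fracSet n k W = ∅ := Finset.card_eq_zero.mp (Nat.le_zero.mp hcard)
    have hq : ∀ a b, a ≤ k → b ≤ k → ∃ m : ℤ, hh n W a b = m := by
      intro a b ha hb
      by_contra hc
      have : (a, b) ∈ fracSet n k W := mem_fracSet.mpr ⟨ha, hb, hc⟩
      rw [hempty] at this
      exact absurd this (Finset.notMem_empty _)
    refine subset_convexHull ℝ (Sset n) ⟨base_isASM hG hn hq, matrix_vsym hG, matrix_hsym hG⟩
  | succ N ih =>
    intro W hG hcard
    by_cases hne : (fracSet n k W).Nonempty
    · set F := fracSet n k W with hF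
      set ep : ℝ := F.inf' hne (fun p => ⌈hh n W p.1 p.2⌉ - hh n W p.1 p.2) with hep
      set em : ℝ := F.inf' hne (fun p => hh n W p.1 p.2 - ⌊hh n W p.1 p.2⌋) with hem
      have hfrac : ∀ p ∈ F, ¬∃ m : ℤ, hh n W p.1 p.2 = m := by
        intro p hp
        exact (mem_fracSet.mp hp).2.2
      have hep_pos : 0 < ep := by
        rw [hep, Finset.lt_inf'_iff]
        intro p hp
        have hne2 : hh n W p.1 p.2 ≠ (⌈hh n W p.1 p.2⌉ : ℝ) := fun h =>
          hfrac p hp ⟨⌈hh n W p.1 p.2⌉, h⟩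
        have := lt_of_le_of_ne (Int.le_ceil (hh n W p.1 p.2)) hne2
        linarith
      have hem_pos : 0 < em := by
        rw [hem, Finset.lt_inf'_iff]
        intro p hp
        have hne2 : hh n W p.1 p.2 ≠ (⌊hh n W p.1 p.2⌋ : ℝ) := fun h =>
          hfrac p hp ⟨⌊hh n W p.1 p.2⌋, h⟩
        have := lt_of_le_of_ne (Int.floor_le (hh n W p.1 p.2)) (Ne.symm hne2)
        linarith
      have heokp : EOK n k W ep := by
        intro p hp
        have h1 := Finset.inf'_le (fun p => ⌈hh n W p.1 p.2⌉ - hh n W p.1 p.2) hp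
        rw [← hep] at h1
        have h2 := Int.floor_le (hh n W p.1 p.2)
        constructor <;> linarith
      have heokm : EOK n k W (-em) := by
        intro p hp
        have h1 := Finset.inf'_le (fun p => hh n W p.1 p.2 - ⌊hh n W p.1 p.2⌋) hp
        rw [← hem] at h1
        have h2 := Int.le_ceil (hh n W p.1 p.2)
        constructor <;> linarith
      -- the two perturbed matrices are Good
      have hGp := good_pert hG hn heokp
      have hGm := good_pert hG hn heokm
      -- their fractional sets are strictly smaller
      obtain ⟨pp, hpp, hppeq⟩ := Finset.exists_mem_eq_inf' hne
        (fun p => ⌈hh n W p.1 p.2⌉ - hh n W p.1 p.2)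
      obtain ⟨pm, hpm, hpmeq⟩ := Finset.exists_mem_eq_inf' hne
        (fun p => hh n W p.1 p.2 - ⌊hh n W p.1 p.2⌋)
      have hppmem := mem_fracSet.mp hpp
      have hpmmem := mem_fracSet.mp hpm
      have hpp_not : pp ∉ fracSet n k (pert n k W ep) := by
        rw [mem_fracSet]
        push_neg
        intro _ _
        refine ⟨⌈hh n W pp.1 pp.2⌉, ?_⟩
        rw [← hep] at hppeq
        rw [hh_pert_quadrant hn ep hppmem.1 hppmem.2.1, ch, if_pos hpp, hppeq]
        ring
      have hpm_not : pm ∉ fracSet n k (pert n k W (-em)) := by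
        rw [mem_fracSet]
        push_neg
        intro _ _
        refine ⟨⌊hh n W pm.1 pm.2⌋, ?_⟩
        rw [← hem] at hpmeq
        rw [hh_pert_quadrant hn (-em) hpmmem.1 hpmmem.2.1, ch, if_pos hpm, hpmeq]
        ring
      have hsubp : fracSet n k (pert n k W ep) ⊆ F := fracSet_pert_subset hn ep
      have hsubm : fracSet n k (pert n k W (-em)) ⊆ F := fracSet_pert_subset hn (-em)
      have hcardp : (fracSet n k (pert n k W ep)).card ≤ N := by
        have hss : fracSet n k (pert n k W ep) ⊂ F := by
          rw [Finset.ssubset_iff_of_subset hsubp]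
          exact ⟨pp, hpp, hpp_not⟩
        have := Finset.card_lt_card hss
        omega
      have hcardm : (fracSet n k (pert n k W (-em))).card ≤ N := by
        have hss : fracSet n k (pert n k W (-em)) ⊂ F := by
          rw [Finset.ssubset_iff_of_subset hsubm]
          exact ⟨pm, hpm, hpm_not⟩
        have := Finset.card_lt_card hss
        omega
      have hmemp := ih (pert n k W ep) hGp hcardp
      have hmemm := ih (pert n k W (-em)) hGm hcardm
      -- convex combination
      have hsum : (0 : ℝ) < ep + em := by linarith
      have hcomb := (convex_convexHull ℝ (Sset n)) hmemp hmemm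
        (by positivity : (0:ℝ) ≤ em / (ep + em)) (by positivity : (0:ℝ) ≤ ep / (ep + em))
        (by field_simp; ring)
      have heq : W = (em / (ep + em)) • pert n k W ep + (ep / (ep + em)) • pert n k W (-em) := by
        funext i j
        simp only [Pi.add_apply, Pi.smul_apply, smul_eq_mul]
        unfold pert
        field_simp
        ring
      rw [heq]
      exact hcomb
    · rw [Finset.not_nonempty_iff_eq_empty] at hne
      have hq : ∀ a b, a ≤ k → b ≤ k → ∃ m : ℤ, hh n W a b = m := by
        intro a b ha hb
        by_contra hc
        have : (a, b) ∈ fracSet n k W := mem_fracSet.mpr ⟨ha, hb, hc⟩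
        rw [hne] at this
        exact absurd this (Finset.notMem_empty _)
      exact subset_convexHull ℝ (Sset n) ⟨base_isASM hG hn hq, matrix_vsym hG, matrix_hsym hG⟩

end MainInduction

section EasyDirection
open Finset

variable {n k : ℕ}

lemma sum_int {s : Finset ℕ} {f : ℕ → ℝ} (h : ∀ j ∈ s, ∃ m : ℤ, f j = m) :
    ∃ m : ℤ, ∑ j ∈ s, f j = m := by
  classical
  induction s using Finset.induction_on with
  | empty => exact ⟨0, by simp⟩
  | insert a t hnotmem ih =>
    obtain ⟨m, hm⟩ := h a (Finset.mem_insert_self a t)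
    obtain ⟨m', hm'⟩ := ih fun j hj => h j (Finset.mem_insert_of_mem hj)
    exact ⟨m + m', by rw [Finset.sum_insert hnotmem, hm, hm']; push_cast; ring⟩

lemma entry_int {W : Fin n → Fin n → ℝ} (hA : IsASM n W) (a b : ℕ) :
    ∃ m : ℤ, ex n W a b = m := by
  by_cases h : a < n ∧ b < n
  · have := hA.1 ⟨a, h.1⟩ ⟨b, h.2⟩
    unfold ex
    rw [dif_pos h]
    rcases this with h' | h' | h' <;> rw [h']
    exacts [⟨-1, by norm_num⟩, ⟨0, by norm_num⟩, ⟨1, by norm_num⟩]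
  · unfold ex
    rw [dif_neg h]
    exact ⟨0, by norm_num⟩

/-- in a vertically symmetric matrix with row sums one, rows split symmetrically -/
lemma row_split {W : Fin n → Fin n → ℝ} (hn : n = 2 * k + 1)
    (hA : IsASM n W) (hv : ∀ i j, W i j = W i j.rev) (a : ℕ) (ha : a < n) :
    ex n W a k = 1 - 2 * rp n W a k := by
  have hvsym : ∀ i j, i < n → j < n → ex n W i j = ex n W i (n - 1 - j) := by
    intro i j hi hj
    have := hv ⟨i, hi⟩ ⟨j, hj⟩
    have hrev : (⟨j, hj⟩ : Fin n).rev = ⟨n - 1 - j, by omega⟩ := by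
      apply Fin.ext
      rw [Fin.val_rev]
      simp only []
      omega
    rw [hrev] at this
    unfold ex
    rw [dif_pos ⟨hi, hj⟩, dif_pos ⟨hi, show n - 1 - j < n by omega⟩]
    exact this
  have hfull : rp n W a n = 1 := by
    have := hA.2.2.2.1 ⟨a, ha⟩
    rw [sum_univ_eq_rp] at this
    exact this
  have hsplit : rp n W a n = rp n W a (k + 1) + ∑ j ∈ Finset.Ico (k + 1) n, ex n W a j := by
    rw [rp, rp, Finset.range_eq_Ico, Finset.range_eq_Ico]
    rw [← Finset.sum_Ico_consecutive (fun j => ex n W a j) (Nat.zero_le (k+1)) (by omega : k + 1 ≤ n)]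
  have htail : ∑ j ∈ Finset.Ico (k + 1) n, ex n W a j = rp n W a k := by
    have : Finset.Ico (k + 1) n = Finset.Ico (n - k) n := by rw [show n - k = k + 1 by omega]
    rw [this, sum_reflect n k (by omega) (fun j => ex n W a j), rp]
    refine Finset.sum_congr rfl fun j hj => ?_
    have hjk : j < k := Finset.mem_range.mp hj
    exact (hvsym a j ha (by omega)).symm
  have hstep : rp n W a (k + 1) = rp n W a k + ex n W a k := by
    rw [rp, rp, Finset.sum_range_succ]
  rw [hfull, hsplit, htail, hstep] at *
  linarith

lemma mid_col_alt {W : Fin n → Fin n → ℝ} (hn : n = 2 * k + 1)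
    (hA : IsASM n W) (hv : ∀ i j, W i j = W i j.rev) :
    ∀ a, a < n → ex n W a k = (-1) ^ a := by
  -- the middle entries are ±1
  have hpm : ∀ a, a < n → ex n W a k = 1 ∨ ex n W a k = -1 := by
    intro a ha
    obtain ⟨m, hm⟩ := sum_int (s := Finset.range k) (f := fun j => ex n W a j)
      (fun j _ => entry_int hA a j)
    have hsplit := row_split hn hA hv a ha
    rw [rp] at hsplit
    rw [hm] at hsplit
    have h3 := hA.1 ⟨a, ha⟩ ⟨k, by omega⟩
    have hexw : ex n W a k = W ⟨a, ha⟩ ⟨k, by omega⟩ := by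
      unfold ex
      rw [dif_pos ⟨ha, show k < n by omega⟩]
    rw [← hexw] at h3
    rcases h3 with h' | h' | h'
    · exact Or.inr h'
    · exfalso
      rw [h'] at hsplit
      have : (1 : ℤ) = 2 * m := by exact_mod_cast (by linarith : (1 : ℝ) = 2 * m)
      omega
    · exact Or.inl h'
  -- column prefix sums
  have hcp01 : ∀ a, a < n → cp n W (a + 1) k = 0 ∨ cp n W (a + 1) k = 1 := by
    intro a ha
    have := hA.2.2.1 ⟨a, ha⟩ ⟨k, by omega⟩
    rw [sum_Iic_eq_cp] at this
    exact this
  have aux : ∀ a, a ≤ n → cp n W a k = (1 - (-1 : ℝ) ^ a) / 2 := by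
    intro a
    induction a with
    | zero => intro _; simp [cp]
    | succ a ih =>
      intro ha
      have hstep : cp n W (a + 1) k = cp n W a k + ex n W a k := by
        rw [cp, cp, Finset.sum_range_succ]
      have hprev := ih (by omega)
      have hcur := hcp01 a (by omega)
      have hcurpm := hpm a (by omega)
      rcases Nat.even_or_odd a with he | ho
      · have hpow : (-1 : ℝ) ^ a = 1 := Even.neg_one_pow he
        have hpow1 : (-1 : ℝ) ^ (a + 1) = -1 := by
          rw [pow_succ, hpow]; ring
        rw [hpow1]
        rw [hprev, hpow] at hstep
        rcases hcurpm with h' | h'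
        · rw [h'] at hstep; rw [hstep]; norm_num
        · exfalso
          rw [h'] at hstep
          rcases hcur with h'' | h'' <;> rw [h''] at hstep <;> linarith
      · have hpow : (-1 : ℝ) ^ a = -1 := Odd.neg_one_pow ho
        have hpow1 : (-1 : ℝ) ^ (a + 1) = 1 := by
          rw [pow_succ, hpow]; ring
        rw [hpow1]
        rw [hprev, hpow] at hstep
        rcases hcurpm with h' | h'
        · exfalso
          rw [h'] at hstep
          rcases hcur with h'' | h'' <;> rw [h''] at hstep <;> linarith
        · rw [h'] at hstep; rw [hstep]; norm_num
  intro a ha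
  have h1 := aux a (by omega)
  have h2 := aux (a + 1) (by omega)
  have hstep : cp n W (a + 1) k = cp n W a k + ex n W a k := by
    rw [cp, cp, Finset.sum_range_succ]
  rw [h1, h2, pow_succ] at hstep
  linarith

end EasyDirection

section Final
open Finset

variable {n k : ℕ}

lemma isASM_transpose {W : Fin n → Fin n → ℝ} (hA : IsASM n W) :
    IsASM n (fun i j => W j i) :=
  ⟨fun i j => hA.1 j i, fun i j => hA.2.2.1 j i, fun i j => hA.2.1 j i,
    hA.2.2.2.2, hA.2.2.2.1⟩

lemma mid_row_alt {W : Fin n → Fin n → ℝ} (hn : n = 2 * k + 1)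
    (hA : IsASM n W) (hhs : ∀ i j, W i j = W i.rev j) :
    ∀ b, b < n → ex n W k b = (-1) ^ b := by
  have hT := mid_col_alt hn (isASM_transpose hA) (fun i j => hhs j i)
  intro b hb
  have h := hT b hb
  have hex : ex n (fun i j => W j i) b k = ex n W k b := by
    unfold ex
    rw [dif_pos ⟨hb, show k < n by omega⟩, dif_pos ⟨show k < n by omega, hb⟩]
  rw [← hex]
  exact h

lemma even_Sset_empty (hn1 : 1 ≤ n) (hpar : n % 2 = 0) (W : Fin n → Fin n → ℝ) :
    W ∉ Sset n := by
  rintro ⟨hA, hv, hhs⟩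
  have h0 : (0 : ℕ) < n := by omega
  have hvsym : ∀ j, j < n → ex n W 0 j = ex n W 0 (n - 1 - j) := by
    intro j hj
    have := hv ⟨0, h0⟩ ⟨j, hj⟩
    have hrev : (⟨j, hj⟩ : Fin n).rev = ⟨n - 1 - j, by omega⟩ := by
      apply Fin.ext
      rw [Fin.val_rev]
      simp only []
      omega
    rw [hrev] at this
    unfold ex
    rw [dif_pos ⟨h0, hj⟩, dif_pos ⟨h0, show n - 1 - j < n by omega⟩]
    exact this
  have hfull : rp n W 0 n = 1 := by
    have := hA.2.2.2.1 ⟨0, h0⟩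
    rw [sum_univ_eq_rp] at this
    exact this
  have hsplit : rp n W 0 n = rp n W 0 (n / 2) + ∑ j ∈ Finset.Ico (n / 2) n, ex n W 0 j := by
    rw [rp, rp, Finset.range_eq_Ico, Finset.range_eq_Ico]
    rw [← Finset.sum_Ico_consecutive (fun j => ex n W 0 j) (Nat.zero_le (n / 2))
      (by omega : n / 2 ≤ n)]
  have htail : ∑ j ∈ Finset.Ico (n / 2) n, ex n W 0 j = rp n W 0 (n / 2) := by
    have heq : Finset.Ico (n / 2) n = Finset.Ico (n - n / 2) n := by
      rw [show n - n / 2 = n / 2 by omega]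
    rw [heq, sum_reflect n (n / 2) (by omega) (fun j => ex n W 0 j), rp]
    refine Finset.sum_congr rfl fun j hj => ?_
    have hjk : j < n / 2 := Finset.mem_range.mp hj
    exact (hvsym j (by omega)).symm
  obtain ⟨m, hm⟩ := sum_int (s := Finset.range (n / 2)) (f := fun j => ex n W 0 j)
    (fun j _ => entry_int hA 0 j)
  rw [hfull, htail] at hsplit
  have hm' : rp n W 0 (n / 2) = (m : ℝ) := hm
  rw [hm'] at hsplit
  have : (1 : ℤ) = 2 * m := by exact_mod_cast (by linarith : (1 : ℝ) = 2 * m)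
  omega

lemma sum_neg_one_even (hpar : n % 2 = 0) :
    ∑ i ∈ Finset.range n, (-1 : ℝ) ^ i = 0 := by
  rw [geom_sum_eq (by norm_num : (-1 : ℝ) ≠ 1) n]
  rw [Even.neg_one_pow (Nat.even_iff.mpr hpar)]
  norm_num

end Final

end VHSaux

open VHSaux in
/-- The polytope of vertically and horizontally symmetric ASMs is the
intersection of the ASM polytope, the two symmetry subspaces, and the fixed
middle row and column. -/
theorem VHSASM_polytope_description (n : ℕ) (hn : 1 ≤ n) :
    convexHull ℝ
        {X : Fin n → Fin n → ℝ |
          IsASM n X ∧ (∀ i j, X i j = X i j.rev) ∧ (∀ i j, X i j = X i.rev j)}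
      = convexHull ℝ {X : Fin n → Fin n → ℝ | IsASM n X}
        ∩ {X : Fin n → Fin n → ℝ | ∀ i j, X i j = X i j.rev}
        ∩ {X : Fin n → Fin n → ℝ | ∀ i j, X i j = X i.rev j}
        ∩ {X : Fin n → Fin n → ℝ |
            ∀ i : Fin n,
              X i ⟨n / 2, Nat.div_lt_self (by omega) (by omega)⟩ = (-1) ^ (i : ℕ) ∧
              X ⟨n / 2, Nat.div_lt_self (by omega) (by omega)⟩ i = (-1) ^ (i : ℕ)} := by
  apply Set.Subset.antisymm
  · -- easy direction
    apply convexHull_min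
    · intro X hX
      obtain ⟨hA, hv, hhs⟩ := hX
      refine ⟨⟨⟨subset_convexHull ℝ _ hA, hv⟩, hhs⟩, ?_⟩
      rcases Nat.even_or_odd n with he | ho
      · exact absurd (show X ∈ Sset n from ⟨hA, hv, hhs⟩)
          (even_Sset_empty hn (Nat.even_iff.mp he) X)
      · obtain ⟨k, hk⟩ := ho
        have hk2 : n / 2 = k := by omega
        have hkn : k < n := by omega
        intro i
        constructor
        · have hcol := mid_col_alt hk hA hv i i.isLt
          have hmid : (⟨n / 2, Nat.div_lt_self (by omega) (by omega)⟩ : Fin n)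
              = ⟨k, hkn⟩ := by
            apply Fin.ext
            simp only []
            omega
          rw [hmid]
          rw [show X i ⟨k, hkn⟩ = ex n X i k by unfold ex; rw [dif_pos ⟨i.isLt, hkn⟩]]
          exact hcol
        · have hrow := mid_row_alt hk hA hhs i i.isLt
          have hmid : (⟨n / 2, Nat.div_lt_self (by omega) (by omega)⟩ : Fin n)
              = ⟨k, hkn⟩ := by
            apply Fin.ext
            simp only []
            omega
          rw [hmid]
          rw [show X ⟨k, hkn⟩ i = ex n X k i by unfold ex; rw [dif_pos ⟨hkn, i.isLt⟩]]
          exact hrow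
    · -- convexity of the right-hand side
      refine (((convex_convexHull ℝ _).inter ?_).inter ?_).inter ?_
      · intro x hx y hy a b ha hb hab i j
        simp only [Pi.add_apply, Pi.smul_apply, smul_eq_mul]
        rw [hx i j, hy i j]
      · intro x hx y hy a b ha hb hab i j
        simp only [Pi.add_apply, Pi.smul_apply, smul_eq_mul]
        rw [hx i j, hy i j]
      · intro x hx y hy a b ha hb hab i
        constructor
        · simp only [Pi.add_apply, Pi.smul_apply, smul_eq_mul]
          rw [(hx i).1, (hy i).1]
          have : a * (-1 : ℝ) ^ (i : ℕ) + b * (-1) ^ (i : ℕ) = (a + b) * (-1) ^ (i : ℕ) := by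
            ring
          rw [this, hab, one_mul]
        · simp only [Pi.add_apply, Pi.smul_apply, smul_eq_mul]
          rw [(hx i).2, (hy i).2]
          have : a * (-1 : ℝ) ^ (i : ℕ) + b * (-1) ^ (i : ℕ) = (a + b) * (-1) ^ (i : ℕ) := by
            ring
          rw [this, hab, one_mul]
  · -- hard direction
    intro X hX
    obtain ⟨⟨⟨h1, h2⟩, h3⟩, h4⟩ := hX
    rcases Nat.even_or_odd n with he | ho
    · exfalso
      have hC := hull_mem_Cset h1
      set mid : Fin n := ⟨n / 2, Nat.div_lt_self (by omega) (by omega)⟩ with hmid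
      have hcol : (∑ i, X i mid) = 1 := hC.2.2.2 mid
      have hval : (∑ i, X i mid) = ∑ i : Fin n, (-1 : ℝ) ^ (i : ℕ) :=
        Finset.sum_congr rfl fun i _ => (h4 i).1
      rw [Fin.sum_univ_eq_sum_range (fun t => (-1 : ℝ) ^ t) n,
        sum_neg_one_even (Nat.even_iff.mp he)] at hval
      rw [hcol] at hval
      norm_num at hval
    · obtain ⟨k, hk⟩ := ho
      have hG := build_good hk (hull_mem_Cset h1) h2 h3 h4
      exact good_in_hull hk (fracSet n k X).card X hG le_rfl
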